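/- arXiv:0805.3753 — 6 statements merged into one kernel-verified Lean document; each statement's English description precedes it below -/
import Mathlib

section
/- Let A be a commutative ring and I ⊆ A an ideal such that for every a ∈ I there exists b ∈ I with a*b = a. Then there exists a multiplicative subset S of A such that the quotient map A → A/I induces an isomorphism S⁻¹A ≅ A/I compatible with the canonical maps A → A/I and A → S⁻¹A. -/
/-! `A ⧸ I` is the localization of `A` at `1 + I`: elements of `1 + I` become `1` in `A ⧸ I`,
and if `a - b ∈ I` then `(a - b) c = a - b` for some `c ∈ I`, so `1 - c ∈ 1 + I` kills `a - b`. -/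

namespace Ideal

variable {A : Type*} [CommRing A] (I : Ideal A)

/-- The multiplicative set `1 + I`. -/
def oneAddSubmonoid : Submonoid A :=
  (⊥ : Submonoid (A ⧸ I)).comap (Ideal.Quotient.mk I)

theorem mem_oneAddSubmonoid_iff {s : A} : s ∈ I.oneAddSubmonoid ↔ s - 1 ∈ I := by
  rw [oneAddSubmonoid, Submonoid.mem_comap, Submonoid.mem_bot, ← Quotient.eq, map_one]

theorem exists_mem_oneAddSubmonoid_mul_eq_zero {a : A} (h : ∃ b ∈ I, a * b = a) :
    ∃ s ∈ I.oneAddSubmonoid, s * a = 0 := by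
  obtain ⟨b, hb, hab⟩ := h
  refine ⟨1 - b, ?_, by linear_combination -hab⟩
  simpa [mem_oneAddSubmonoid_iff] using I.neg_mem hb

theorem isLocalization_quotient_oneAddSubmonoid
    (h : ∀ a ∈ I, ∃ s ∈ I.oneAddSubmonoid, s * a = 0) :
    IsLocalization I.oneAddSubmonoid (A ⧸ I) where
  map_units s := by
    rw [Quotient.algebraMap_eq, Submonoid.mem_comap.mp s.2]
    exact isUnit_one
  surj z := by
    obtain ⟨a, rfl⟩ := Quotient.mk_surjective z
    exact ⟨⟨a, 1⟩, by simp⟩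
  exists_of_eq {a b} hab := by
    rw [Quotient.algebraMap_eq, Quotient.eq] at hab
    obtain ⟨s, hs, hsab⟩ := h (a - b) hab
    exact ⟨⟨s, hs⟩, by linear_combination hsab⟩

end Ideal

/-- If every element `a` of an ideal `I` admits `b ∈ I` with `a * b = a`, then there is a
multiplicative subset `S` of `A` such that `A/I ≅ S⁻¹A`, compatibly with the canonical maps
`A → S⁻¹A` and `A → A/I`. -/
theorem stmt_0 {A : Type} [CommRing A] (I : Ideal A)
    (h : ∀ a ∈ I, ∃ b ∈ I, a * b = a) :
    ∃ (S : Submonoid A) (e : Localization S ≃+* A ⧸ I),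
      (e : Localization S →+* A ⧸ I).comp (algebraMap A (Localization S)) =
        Ideal.Quotient.mk I := by
  have := I.isLocalization_quotient_oneAddSubmonoid
    fun a ha ↦ I.exists_mem_oneAddSubmonoid_mul_eq_zero (h a ha)
  let e := IsLocalization.algEquiv I.oneAddSubmonoid (Localization I.oneAddSubmonoid) (A ⧸ I)
  exact ⟨I.oneAddSubmonoid, e.toRingEquiv, RingHom.ext e.commutes⟩
end

section
/- Let A be a commutative Noetherian ring and I ⊆ A an ideal. If there exists a multiplicative subset S of A such that A/I ≅ S⁻¹A compatibly with the canonical maps, then I is generated by an idempotent element. -/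
/-!
Since `A ⧸ I` is isomorphic, as an `A`-algebra, to a localization of `A`, it is a flat
`A`-module, i.e. `I` is a pure ideal. A pure ideal satisfies `I ^ 2 = I`, and a finitely generated
idempotent ideal is generated by an idempotent element (Nakayama).
-/

theorem Ideal.pure_of_ringEquiv_localization {A : Type*} [CommRing A] (I : Ideal A)
    (S : Submonoid A) (e : Localization S ≃+* A ⧸ I)
    (he : (e : Localization S →+* A ⧸ I).comp (algebraMap A (Localization S)) =
      Ideal.Quotient.mk I) :
    I.Pure :=
  have : IsLocalization S (A ⧸ I) :=
    IsLocalization.isLocalization_of_algEquiv S (AlgEquiv.ofRingEquiv (R := A) (f := e)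
      fun a => RingHom.congr_fun he a)
  IsLocalization.flat (A ⧸ I) S

/-- If `A` is Noetherian and `A/I` is a localization of `A` at some multiplicative subset
(compatibly with the canonical maps), then `I` is generated by an idempotent. -/
theorem stmt_1 {A : Type} [CommRing A] [IsNoetherianRing A] (I : Ideal A)
    (h : ∃ (S : Submonoid A) (e : Localization S ≃+* A ⧸ I),
      (e : Localization S →+* A ⧸ I).comp (algebraMap A (Localization S)) =
        Ideal.Quotient.mk I) :
    ∃ e : A, IsIdempotentElem e ∧ I = Ideal.span {e} := by
  obtain ⟨S, e, he⟩ := h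
  have : I.Pure := I.pure_of_ringEquiv_localization S e he
  exact (I.isIdempotentElem_iff_of_fg (IsNoetherian.noetherian I)).mp I.isIdempotentElem_of_pure
end

section
/- Let X and Y be schemes with X integral and Y separated, and let f, g : X → Y be two morphisms. If f and g send the generic point η of X to the same point y ∈ Y, and f and g induce the same field homomorphism κ(y) → κ(η) on residue fields, then f = g. -/
open AlgebraicGeometry CategoryTheory

/-! A morphism out of `Spec κ(x)` is determined by the image of its point and the map on residue
fields, so `f` and `g` agree after composing with `Spec κ(η) ⟶ X`. That morphism has dense image
since `η` is generic, and morphisms from a reduced scheme to a separated one that agree on a dominant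
morphism are equal. -/

namespace AlgebraicGeometry

instance isDominant_fromSpecResidueField_genericPoint (X : Scheme) [IrreducibleSpace X] :
    IsDominant (X.fromSpecResidueField (genericPoint X)) where
  denseRange := by
    rw [DenseRange, Scheme.range_fromSpecResidueField, dense_iff_closure_eq]
    exact genericPoint_spec X

lemma Scheme.Hom.fromSpecResidueField_comp_eq_of_residueFieldMap_eq {X Y : Scheme}
    {f g : X ⟶ Y} {x : X} (h : f.base x = g.base x)
    (hres : f.residueFieldMap x = eqToHom (by rw [h]) ≫ g.residueFieldMap x) :
    X.fromSpecResidueField x ≫ f = X.fromSpecResidueField x ≫ g := by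
  rw [← Scheme.Hom.SpecMap_residueFieldMap_fromSpecResidueField,
    ← Scheme.Hom.SpecMap_residueFieldMap_fromSpecResidueField, hres, Spec.map_comp,
    Category.assoc]
  congr 1
  exact Scheme.residueFieldCongr_fromSpecResidueField h

end AlgebraicGeometry

/-- If `X` is integral, `Y` is separated, and two morphisms `f, g : X ⟶ Y` send the generic
point `η` of `X` to the same point and induce the same homomorphism `κ(y) → κ(η)` on residue
fields, then `f = g`. -/
theorem stmt_6 {X Y : Scheme} [IsIntegral X] [Y.IsSeparated] (f g : X ⟶ Y)
    (h : f.base (genericPoint X) = g.base (genericPoint X))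
    (hres : f.residueFieldMap (genericPoint X) =
      eqToHom (by rw [h]) ≫ g.residueFieldMap (genericPoint X)) : f = g :=
  ext_of_isDominant (X.fromSpecResidueField (genericPoint X))
    (Scheme.Hom.fromSpecResidueField_comp_eq_of_residueFieldMap_eq h hres)
end

section
/- Let C be a category and ∼ an equivalence relation on C (a congruence: equivalence relations ∼ on each Hom-set compatible with composition on both sides). Let S be the class of morphisms of C that become invertible in C/∼. If whenever f ∼ g the morphisms f and g become equal in the localization S⁻¹C, then the canonical functor S⁻¹C → C/∼ is an isomorphism of categories. -/
open CategoryTheory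

/-- Let `r` be a congruence on a category `C`, and `W` the class of morphisms becoming invertible
in the quotient category `C/r`. If `r`-equivalent morphisms become equal in the localization
`W⁻¹C`, then the canonical functor `W⁻¹C → C/r` (the one commuting with the canonical functors
from `C`) is an isomorphism of categories. -/
theorem stmt_8 {C : Type} [Category C] (r : HomRel C) (hr : Congruence r)
    (W : MorphismProperty C)
    (hW : ∀ ⦃X Y : C⦄ (f : X ⟶ Y), W f ↔ IsIso ((CategoryTheory.Quotient.functor r).map f))
    (h : ∀ ⦃X Y : C⦄ (f g : X ⟶ Y), r f g → W.Q.map f = W.Q.map g) :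
    ∃ (Φ : W.Localization ⥤ CategoryTheory.Quotient r)
      (Ψ : CategoryTheory.Quotient r ⥤ W.Localization),
      W.Q ⋙ Φ = CategoryTheory.Quotient.functor r ∧ Φ ⋙ Ψ = 𝟭 _ ∧ Ψ ⋙ Φ = 𝟭 _ := by
  let Φ := Localization.Construction.lift (Quotient.functor r)
    (fun X Y f hf => (hW f).1 hf)
  let Ψ := CategoryTheory.Quotient.lift r W.Q (fun X Y f g hfg => h f g hfg)
  have fac1 : W.Q ⋙ Φ = Quotient.functor r := Localization.Construction.fac _ _
  have fac2 : Quotient.functor r ⋙ Ψ = W.Q := CategoryTheory.Quotient.lift_spec _ _ _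
  refine ⟨Φ, Ψ, fac1, ?_, ?_⟩
  · apply Localization.Construction.uniq
    rw [← Functor.assoc, fac1, fac2, Functor.comp_id]
  · apply CategoryTheory.Quotient.lift_unique' r
    rw [← Functor.assoc, fac2, fac1, Functor.comp_id]
end

section
/- Let C be a category with a collection of morphisms S, and let X be an S-local object (for every s : Y → Z in S, precomposition by s gives a bijection C(Z,X) → C(Y,X)). Then for any object W, the localization functor induces a bijection C(W, X) → (S⁻¹C)(W, X). -/
/-!
The presheaf `yoneda.obj X` inverts `W` because `X` is `W`-local, so it descends along the
localization functor `L` to a presheaf `G` with `G (L Y) ≅ (Y ⟶ X)`; let `e ∈ G (L X)` correspond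
to `𝟙 X`. Under this isomorphism `f` corresponds to `G (L f) e`, whence `L.map` is injective.
Viewed as a natural transformation `yoneda.obj X ⟶ L.op ⋙ yoneda.obj (L X)`, `L.map` descends
to `θ : G ⟶ yoneda.obj (L X)`, and naturality of `θ` shows that `u : L Y ⟶ L X` is the image
of the morphism corresponding to `G u e`.
-/

open CategoryTheory

namespace CategoryTheory.MorphismProperty.isLocal

universe v u u'

variable {C : Type u} {D : Type u'} [Category.{v} C] [Category.{v} D] {W : MorphismProperty C}
  {X : C}

lemma isInvertedBy_yoneda_obj (hX : W.isLocal X) : W.op.IsInvertedBy (yoneda.obj X) :=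
  fun _ _ s hs => (isIso_iff_bijective _).2 (hX s.unop hs)

theorem map_bijective (hX : W.isLocal X) (L : C ⥤ D) [L.IsLocalization W] (Y : C) :
    Function.Bijective (L.map : (Y ⟶ X) → (L.obj Y ⟶ L.obj X)) := by
  let G := Localization.lift (yoneda.obj X) hX.isInvertedBy_yoneda_obj L.op
  let α : L.op ⋙ G ≅ yoneda.obj X := Localization.Lifting.iso L.op W.op _ G
  let θ : G ⟶ yoneda.obj (L.obj X) :=
    Localization.liftNatTrans L.op W.op _ _ G (yoneda.obj (L.obj X)) (yonedaMap L X)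
  let e : G.obj (.op (L.obj X)) := α.inv.app (.op X) (𝟙 X)
  have hα : ∀ f : Y ⟶ X, α.inv.app (.op Y) f = G.map (L.map f).op e := fun f => by
    simpa using types_congr_hom (α.inv.naturality f.op) (𝟙 X)
  have hθ : ∀ Z (f : Z ⟶ X), θ.app (.op (L.obj Z)) (α.inv.app (.op Z) f) = L.map f := fun Z f =>
    (types_congr_hom (Localization.liftNatTrans_app L.op W.op _ _ G _ (yonedaMap L X) (.op Z))
      (α.inv.app (.op Z) f)).trans (by simp [α, yonedaMap])
  refine ⟨fun f g hfg => ?_, fun u => ⟨α.hom.app (.op Y) (G.map u.op e), ?_⟩⟩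
  · have : α.inv.app (.op Y) f = α.inv.app (.op Y) g := by
      rw [hα, hα, hfg]
    simpa using congrArg (α.hom.app (.op Y)) this
  · calc L.map (α.hom.app (.op Y) (G.map u.op e))
        _ = θ.app _ (α.inv.app _ (α.hom.app (.op Y) (G.map u.op e))) := (hθ Y _).symm
        _ = θ.app _ (G.map u.op e) := by simp
        _ = u ≫ θ.app _ e := by simp
        _ = u := by simp [e, hθ]

end CategoryTheory.MorphismProperty.isLocal

/-- If `X` is an `S`-local object of a category `C`, then for every object `W'` the localization
functor induces a bijection `C(W', X) ≃ (S⁻¹C)(W', X)`. -/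
theorem stmt_9 {C : Type} [Category C] (W : MorphismProperty C) (X : C)
    (hX : ∀ ⦃Y Z : C⦄ (s : Y ⟶ Z), W s → Function.Bijective (fun g : Z ⟶ X => s ≫ g)) :
    ∀ W' : C, Function.Bijective (fun f : W' ⟶ X => W.Q.map f) :=
  MorphismProperty.isLocal.map_bijective hX W.Q
end

section
/- Let Y be an integral separated F-scheme of finite type, O a valuation ring of F(Y)/F with residue field K and center y ∈ Y, and assume the natural map κ(y) → K is an isomorphism. Then for any dominant-into-y rational map f : X ⇢ Y with X integral sending η_X to y, there exists a unique place v : F(Y) ⇝ F(X) with valuation ring O that is compatible with f. -/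
/-!
Since `κ(y) → κ(O)` is an isomorphism, the kernel of `O_{Y,y} → κ(O)` is the maximal ideal
of `O_{Y,y}`, which is also the kernel of the local homomorphism `O_{Y,y} → F(X)` induced by
`f`. So the latter factors through the surjection `O_{Y,y} → κ(O)`, and composing with the
residue map of `O` gives the place. It is unique because a place with valuation ring `O` factors through
`κ(O)`, every element of which comes from `O_{Y,y}`.
-/

open AlgebraicGeometry CategoryTheory

/-- A place from `K` to `L`, given by its valuation ring `O ⊆ K` and a ring homomorphism
`ρ : O → L` whose kernel is the maximal ideal (so `ρ` is the residue map followed by an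
embedding of the residue field into `L`). -/
structure PlaceData (K L : Type*) [Field K] [Field L] where
  O : ValuationSubring K
  ρ : O →+* L
  ker_eq : RingHom.ker ρ = IsLocalRing.maximalIdeal O

/-- A morphism `f : X ⟶ Y` of integral schemes is *compatible* with a place
`p : F(Y) ⇝ F(X)` if the valuation ring of `p` has centre `y = f(η_X)` on `Y` (it contains
the image of the local ring `O_{Y,y}` in `F(Y)`) and the composite
`O_{Y,y} → O_p → F(X)` coincides with the map induced by `f` on generic stalks. -/
def Compatible {X Y : Scheme} [IsIntegral X] [IsIntegral Y]
    (f : X ⟶ Y) (p : PlaceData Y.functionField X.functionField) : Prop :=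
  ∃ hc : ∀ a : Y.presheaf.stalk (f.base (genericPoint X)),
      Y.presheaf.stalkSpecializes (genericPoint_specializes _) a ∈ p.O,
    ∀ a : Y.presheaf.stalk (f.base (genericPoint X)),
      p.ρ ⟨Y.presheaf.stalkSpecializes (genericPoint_specializes _) a, hc a⟩ =
        f.stalkMap (genericPoint X) a

namespace IsLocalRing

variable {R S L : Type*} [CommRing R] [CommRing S] [IsLocalRing S] [Ring L]

theorem ringHom_ext_of_surjective_residue_comp {σ : R →+* S}
    (hσ : Function.Surjective ((residue S).comp σ)) {ρ₁ ρ₂ : S →+* L}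
    (h₁ : maximalIdeal S ≤ RingHom.ker ρ₁) (h₂ : maximalIdeal S ≤ RingHom.ker ρ₂)
    (h : ρ₁.comp σ = ρ₂.comp σ) : ρ₁ = ρ₂ := by
  have eq_of_residue_eq {ρ : S →+* L} (hρ : maximalIdeal S ≤ RingHom.ker ρ) {s t : S}
      (hst : residue S s = residue S t) : ρ s = ρ t := by
    have : s - t ∈ RingHom.ker ρ := hρ <| by
      rw [← ker_residue, RingHom.mem_ker, map_sub, hst, sub_self]
    rwa [RingHom.mem_ker, map_sub, sub_eq_zero] at this
  ext x
  obtain ⟨a, ha⟩ := hσ (residue S x)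
  rw [← eq_of_residue_eq h₁ ha, ← eq_of_residue_eq h₂ ha]
  exact RingHom.congr_fun h a

theorem exists_ker_eq_maximalIdeal_comp_eq [Nontrivial L] {σ : R →+* S}
    (hσ : Function.Surjective ((residue S).comp σ)) {g : R →+* L}
    (hg : RingHom.ker ((residue S).comp σ) ≤ RingHom.ker g) :
    ∃ ρ : S →+* L, RingHom.ker ρ = maximalIdeal S ∧ ρ.comp σ = g := by
  let ψ : ResidueField S →+* L := ((residue S).comp σ).liftOfSurjective hσ ⟨g, hg⟩
  refine ⟨ψ.comp (residue S), ?_, ?_⟩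
  · have hψ : Function.Injective ψ := ψ.injective
    rw [RingHom.ker_comp_of_injective (residue S) hψ, ker_residue]
  · exact ((residue S).comp σ).liftOfSurjective_comp hσ ⟨g, hg⟩

theorem ker_eq_maximalIdeal_of_isLocalHom [IsLocalRing R] {K : Type*} [Field K] (g : R →+* K)
    [IsLocalHom g] : RingHom.ker g = maximalIdeal R := by
  rw [RingHom.ker_eq_comap_bot, ← maximalIdeal_eq_bot, maximalIdeal_comap]

end IsLocalRing

open IsLocalRing

theorem stmt_12_general {Y : Scheme} [IsIntegral Y]
    (O : ValuationSubring Y.functionField) (y : Y)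
    (hc : ∀ a : Y.presheaf.stalk y,
      Y.presheaf.stalkSpecializes (genericPoint_specializes y) a ∈ O)
    (hsurj : Function.Surjective (fun a : Y.presheaf.stalk y =>
      IsLocalRing.residue O ⟨Y.presheaf.stalkSpecializes (genericPoint_specializes y) a, hc a⟩))
    (hker : ∀ a : Y.presheaf.stalk y,
      IsLocalRing.residue O ⟨Y.presheaf.stalkSpecializes (genericPoint_specializes y) a, hc a⟩ = 0
        ↔ a ∈ IsLocalRing.maximalIdeal (Y.presheaf.stalk y))
    {X : Scheme} [IsIntegral X] (f : X ⟶ Y)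
    (hy : f.base (genericPoint X) = y) :
    ∃! v : PlaceData Y.functionField X.functionField, v.O = O ∧ Compatible f v := by
  subst hy
  let σ := (Y.presheaf.stalkSpecializes (genericPoint_specializes _)).hom.codRestrict O hc
  let g := (f.stalkMap (genericPoint X)).hom
  have hσ : Function.Surjective ((residue O).comp σ) := hsurj
  have hkerσ : RingHom.ker ((residue O).comp σ) = RingHom.ker g := by
    rw [ker_eq_maximalIdeal_of_isLocalHom g]
    exact Ideal.ext hker
  obtain ⟨ρ, hρ, hρσ⟩ := exists_ker_eq_maximalIdeal_comp_eq hσ hkerσ.le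
  refine ⟨⟨O, ρ, hρ⟩, ⟨rfl, hc, RingHom.congr_fun hρσ⟩, ?_⟩
  rintro ⟨O', ρ', hρ'⟩ ⟨rfl, hcompat⟩
  obtain ⟨_, hρ'σ⟩ := hcompat
  congr
  exact ringHom_ext_of_surjective_residue_comp hσ hρ'.ge hρ.ge
    ((RingHom.ext hρ'σ).trans hρσ.symm)

/-- Let `Y` be an integral separated `F`-scheme of finite type, `O` a valuation ring of
`F(Y)/F` with centre `y ∈ Y` (i.e. dominating `O_{Y,y}`) such that the natural map
`κ(y) → κ(O)` is an isomorphism (the induced map from the stalk at `y` to the residue field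
of `O` is surjective with kernel the maximal ideal). Then for any morphism `f : X ⟶ Y` with
`X` integral sending the generic point `η_X` to `y`, there is a unique place
`v : F(Y) ⇝ F(X)` with valuation ring `O` compatible with `f`. -/
theorem stmt_12 {F : Type} [Field F] {Y : Scheme} [IsIntegral Y]
    (pY : Y ⟶ Spec (CommRingCat.of F))
    [LocallyOfFiniteType pY] [QuasiCompact pY] [AlgebraicGeometry.IsSeparated pY]
    (O : ValuationSubring Y.functionField) (y : Y)
    (hF : ∀ c : (Spec (CommRingCat.of F)).presheaf.stalk (pY.base (genericPoint Y)),
      pY.stalkMap (genericPoint Y) c ∈ O)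
    (hc : ∀ a : Y.presheaf.stalk y,
      Y.presheaf.stalkSpecializes (genericPoint_specializes y) a ∈ O)
    (hsurj : Function.Surjective (fun a : Y.presheaf.stalk y =>
      IsLocalRing.residue O ⟨Y.presheaf.stalkSpecializes (genericPoint_specializes y) a, hc a⟩))
    (hker : ∀ a : Y.presheaf.stalk y,
      IsLocalRing.residue O ⟨Y.presheaf.stalkSpecializes (genericPoint_specializes y) a, hc a⟩ = 0
        ↔ a ∈ IsLocalRing.maximalIdeal (Y.presheaf.stalk y))
    {X : Scheme} [IsIntegral X] (f : X ⟶ Y)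
    (hy : f.base (genericPoint X) = y) :
    ∃! v : PlaceData Y.functionField X.functionField, v.O = O ∧ Compatible f v :=
  stmt_12_general O y hc hsurj hker f hy
end
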